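/- arXiv:1902.04785 — 7 statements merged into one kernel-verified Lean document; each statement's English description precedes it below -/
import Mathlib

section
/- Let y₁, y₂ be words over Σ, # ∉ Σ, y₃ = y₁#y₂, and ℓ > 0. A word x ∈ MAW^ℓ(y₁) belongs to MAW^ℓ(y₃) if and only if x is a superword of (i.e., contains as a factor) some word in MAW^ℓ(y₂). -/
/-- `x` is a minimal absent word (MAW) of `y`: `x` is not a factor of `y`,
but every proper factor of `x` is a factor of `y`. -/
def MAW {α : Type*} (y x : List α) : Prop :=
  ¬ x <:+: y ∧ ∀ f : List α, f <:+: x → f ≠ x → f <:+: y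

/-- MAW of length at most `ℓ`. -/
def MAWle {α : Type*} (ℓ : ℕ) (y x : List α) : Prop :=
  MAW y x ∧ x.length ≤ ℓ

/-- Reduced set: MAWs of `u` (length ≤ ℓ) containing no MAW of `v` (length ≤ ℓ) as a factor. -/
def RMAW {α : Type*} (ℓ : ℕ) (u v x : List α) : Prop :=
  MAWle ℓ u x ∧ ∀ w : List α, MAWle ℓ v w → ¬ w <:+: x

lemma infix_split {α : Type*} {hash : α} {u y₁ y₂ : List α}
    (h : u <:+: y₁ ++ hash :: y₂) (hh : hash ∉ u) : u <:+: y₁ ∨ u <:+: y₂ := by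
  obtain ⟨s, t, hst⟩ := h
  by_cases h1 : s.length + u.length ≤ y₁.length
  · left
    have h2 : s ++ u <+: y₁ := by
      have e1 : (s ++ u ++ t).take (s ++ u).length = s ++ u := List.take_left ..
      have e2 : (y₁ ++ hash :: y₂).take y₁.length = y₁ := List.take_left ..
      rw [← e1, ← e2, hst]
      rw [List.take_isPrefix_take]
      left; simp; omega
    exact ((List.suffix_append s u).isInfix).trans h2.isInfix
  · by_cases h2 : y₁.length + 1 ≤ s.length
    · right
      obtain ⟨k, hk⟩ : ∃ k, s.length = y₁.length + (k + 1) := ⟨s.length - y₁.length - 1, by omega⟩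
      have e1 : (s ++ (u ++ t)).drop s.length = u ++ t := List.drop_left ..
      have e2 : (y₁ ++ hash :: y₂).drop s.length = y₂.drop k := by
        rw [hk, ← List.drop_drop, List.drop_left]
        simp [List.drop_succ_cons]
      rw [List.append_assoc] at hst
      rw [hst, e2] at e1
      exact ((List.prefix_append u t).isInfix.trans (by rw [e1])).trans
        (List.drop_suffix k y₂).isInfix
    · exfalso
      apply hh
      have hj : y₁.length - s.length < u.length := by omega
      have hs : s.length ≤ y₁.length := by omega
      have e1 : (y₁ ++ hash :: y₂)[y₁.length]? = some hash := by
        rw [List.getElem?_append_right (le_refl _)]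
        simp
      rw [← hst, List.append_assoc, List.getElem?_append_right hs,
        List.getElem?_append_left hj] at e1
      exact List.mem_of_getElem? e1

lemma exists_min_maw {α : Type*} {x y : List α} (hx : ¬ x <:+: y) :
    ∃ w, MAW y w ∧ w <:+: x ∧ w.length ≤ x.length := by
  classical
  have hT : ∃ n, ∃ w : List α, w <:+: x ∧ ¬ w <:+: y ∧ w.length = n :=
    ⟨x.length, x, List.infix_refl x, hx, rfl⟩
  obtain ⟨w, hwx, hwy, hwn⟩ := Nat.find_spec hT
  refine ⟨w, ⟨hwy, fun f hf hne => ?_⟩, hwx, hwx.length_le⟩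
  by_contra hfy
  have hlt : f.length < w.length := by
    rcases lt_or_eq_of_le hf.length_le with h | h
    · exact h
    · exact absurd (hf.eq_of_length h) hne
  exact Nat.find_min hT (by omega : f.length < Nat.find hT)
    ⟨f, hf.trans hwx, hfy, rfl⟩

theorem case1_characterization {α : Type*} (S : Set α) (hash : α)
    (hhash : hash ∉ S) (y₁ y₂ : List α)
    (hy₁ : ∀ a ∈ y₁, a ∈ S) (hy₂ : ∀ a ∈ y₂, a ∈ S)
    (ℓ : ℕ) (hℓ : 0 < ℓ) (x : List α) (hxS : ∀ a ∈ x, a ∈ S)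
    (hx : MAWle ℓ y₁ x) :
    MAWle ℓ (y₁ ++ hash :: y₂) x ↔ ∃ w : List α, MAWle ℓ y₂ w ∧ w <:+: x := by
  obtain ⟨⟨hx1, hx2⟩, hxl⟩ := hx
  constructor
  · rintro ⟨⟨h1, h2⟩, -⟩
    have hxy2 : ¬ x <:+: y₂ := fun h =>
      h1 (h.trans ((List.suffix_cons hash y₂).trans (List.suffix_append y₁ _)).isInfix)
    obtain ⟨w, hw, hwx, hwl⟩ := exists_min_maw hxy2
    exact ⟨w, ⟨hw, hwl.trans hxl⟩, hwx⟩
  · rintro ⟨w, ⟨⟨hw1, hw2⟩, hwl⟩, hwx⟩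
    refine ⟨⟨?_, ?_⟩, hxl⟩
    · intro h
      have hxh : hash ∉ x := fun hm => hhash (hxS _ hm)
      rcases infix_split h hxh with h | h
      · exact hx1 h
      · exact hw1 (hwx.trans h)
    · intro f hf hne
      exact (hx2 f hf hne).trans (List.prefix_append y₁ _).isInfix
end

section
/- Let y₁, y₂ be words over Σ, # ∉ Σ, y₃ = y₁#y₂, ℓ > 0. Every word in MAW^ℓ(y₁) ∩ MAW^ℓ(y₂) belongs to MAW^ℓ(y₃). -/
/-! A factor of `y₁ # y₂` avoiding the separator `#` is a factor of `y₁` or of `y₂`; so a word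
absent from both `y₁` and `y₂` stays absent from `y₁ # y₂`, while its proper factors, present in
`y₁`, remain present in the longer word. -/

theorem List.IsInfix.infix_or_infix_of_not_mem {α : Type*} {x u v : List α} {a : α}
    (h : x <:+: u ++ a :: v) (ha : a ∉ x) : x <:+: u ∨ x <:+: v := by
  have prefix_nil {l : List α} (hl : l <+: a :: v) (hal : a ∉ l) : l = [] := by
    rcases List.prefix_cons_iff.mp hl with rfl | ⟨t, rfl, -⟩
    · rfl
    · exact absurd List.mem_cons_self hal
  rcases List.infix_append_iff.mp h with hu | hv | ⟨l₁, l₂, rfl, hl₁, hl₂⟩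
  · exact .inl hu
  · rcases List.infix_cons_iff.mp hv with hp | hv
    · exact .inl (prefix_nil hp ha ▸ List.nil_infix)
    · exact .inr hv
  · have : l₂ = [] := prefix_nil hl₂ fun hm => ha (List.mem_append_right l₁ hm)
    subst this
    exact .inl (by simpa using hl₁.isInfix)

theorem MAW.append_cons {α : Type*} {y₁ y₂ x : List α} {a : α}
    (h₁ : MAW y₁ x) (h₂ : MAW y₂ x) (ha : a ∉ x) : MAW (y₁ ++ a :: y₂) x :=
  ⟨fun hx => (hx.infix_or_infix_of_not_mem ha).elim h₁.1 h₂.1,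
    fun f hf hne => List.infix_append_of_infix_left (h₁.2 f hf hne)⟩

theorem inter_maw_subset_general {α : Type*} (S : Set α) (hash : α)
    (hhash : hash ∉ S) (y₁ y₂ : List α)
    (ℓ : ℕ) (x : List α) (hxS : ∀ a ∈ x, a ∈ S)
    (h₁ : MAWle ℓ y₁ x) (h₂ : MAWle ℓ y₂ x) :
    MAWle ℓ (y₁ ++ hash :: y₂) x :=
  ⟨h₁.1.append_cons h₂.1 fun h => hhash (hxS hash h), h₁.2⟩

theorem inter_maw_subset {α : Type*} (S : Set α) (hash : α)
    (hhash : hash ∉ S) (y₁ y₂ : List α)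
    (hy₁ : ∀ a ∈ y₁, a ∈ S) (hy₂ : ∀ a ∈ y₂, a ∈ S)
    (ℓ : ℕ) (hℓ : 0 < ℓ) (x : List α) (hxS : ∀ a ∈ x, a ∈ S)
    (h₁ : MAWle ℓ y₁ x) (h₂ : MAWle ℓ y₂ x) :
    MAWle ℓ (y₁ ++ hash :: y₂) x :=
  inter_maw_subset_general S hash hhash y₁ y₂ ℓ x hxS h₁ h₂
end

section
/- Let y₁, y₂ be words over Σ, # ∉ Σ, y₃ = y₁#y₂, and let x = aub with a,b ∈ Σ be such that x ∈ MAW^ℓ(y₃) but x ∉ MAW^ℓ(y₁) ∪ MAW^ℓ(y₂). Then either (au occurs in y₁ but not in y₂ and ub occurs in y₂ but not in y₁) or (au occurs in y₂ but not in y₁ and ub occurs in y₁ but not in y₂). -/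
theorem List.infix_or_infix_of_infix_append_cons {α : Type*} {c : α} {l l₁ l₂ : List α}
    (hc : c ∉ l) (h : l <:+: l₁ ++ c :: l₂) : l <:+: l₁ ∨ l <:+: l₂ := by
  have eq_nil_of_prefix : ∀ {t : List α}, t <+: c :: l₂ → c ∉ t → t = [] := by
    rintro (_ | ⟨d, t⟩) ht hct
    · rfl
    · exact absurd ((List.cons_prefix_cons.1 ht).1 ▸ List.mem_cons_self) hct
  rcases List.infix_append_iff.1 h with h | h | ⟨s, t, rfl, hs, ht⟩
  · exact .inl h
  · rcases List.infix_cons_iff.1 h with h | h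
    · exact .inl (eq_nil_of_prefix h hc ▸ List.nil_infix)
    · exact .inr h
  · rw [eq_nil_of_prefix ht fun m => hc (List.mem_append_right _ m), List.append_nil]
    exact .inl hs.isInfix

theorem List.IsInfix.infix_dropLast_or_infix_tail {α : Type*} {l₁ l₂ : List α}
    (h : l₁ <:+: l₂) (hne : l₁ ≠ l₂) : l₁ <:+: l₂.dropLast ∨ l₁ <:+: l₂.tail := by
  obtain ⟨s, t, rfl⟩ := h
  rcases t with _ | ⟨w, t⟩
  · rcases s with _ | ⟨d, s⟩
    · simp at hne
    · exact .inr ⟨s, [], rfl⟩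
  · left
    rw [List.dropLast_append_of_ne_nil (List.cons_ne_nil w t)]
    exact List.infix_append _ _ _

theorem maw_iff {α : Type*} {y x : List α} :
    MAW y x ↔ ¬ x <:+: y ∧ x.dropLast <:+: y ∧ x.tail <:+: y := by
  constructor
  · rintro ⟨hx, hfactors⟩
    obtain ⟨d, t, rfl⟩ := List.exists_cons_of_ne_nil (l := x) (by rintro rfl; exact hx List.nil_infix)
    exact ⟨hx, hfactors _ (List.dropLast_prefix _).isInfix (ne_of_apply_ne List.length (by simp)),
      hfactors _ (List.tail_suffix _).isInfix (ne_of_apply_ne List.length (by simp))⟩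
  · rintro ⟨hx, hdrop, htail⟩
    refine ⟨hx, fun f hf hne => ?_⟩
    rcases hf.infix_dropLast_or_infix_tail hne with hf | hf
    · exact hf.trans hdrop
    · exact hf.trans htail

theorem case2_factors_general {α : Type*} (S : Set α) (hash : α)
    (hhash : hash ∉ S) (y₁ y₂ : List α)
    (ℓ : ℕ) (a b : α) (ha : a ∈ S) (hb : b ∈ S)
    (u : List α) (hu : ∀ c ∈ u, c ∈ S)
    (hx : MAWle ℓ (y₁ ++ hash :: y₂) (a :: u ++ [b]))
    (h₁ : ¬ MAWle ℓ y₁ (a :: u ++ [b]))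
    (h₂ : ¬ MAWle ℓ y₂ (a :: u ++ [b])) :
    ((a :: u) <:+: y₁ ∧ ¬ (a :: u) <:+: y₂ ∧
      (u ++ [b]) <:+: y₂ ∧ ¬ (u ++ [b]) <:+: y₁) ∨
    ((a :: u) <:+: y₂ ∧ ¬ (a :: u) <:+: y₁ ∧
      (u ++ [b]) <:+: y₁ ∧ ¬ (u ++ [b]) <:+: y₂) := by
  obtain ⟨⟨hx_absent, hau, hub⟩, hlen⟩ := And.imp_left maw_iff.1 hx
  rw [List.dropLast_concat] at hau
  have hash_free : ∀ w : List α, (∀ c ∈ w, c ∈ S) → hash ∉ w := fun _ hw h => hhash (hw _ h)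
  have hau₁₂ := List.infix_or_infix_of_infix_append_cons
    (hash_free _ (List.forall_mem_cons.2 ⟨ha, hu⟩)) hau
  have hub₁₂ := List.infix_or_infix_of_infix_append_cons
    (hash_free _ (List.forall_mem_append.2 ⟨hu, List.forall_mem_singleton.2 hb⟩)) hub
  have not_both : ∀ y, y <:+: y₁ ++ hash :: y₂ → ¬ MAWle ℓ y (a :: u ++ [b]) →
      ¬ ((a :: u) <:+: y ∧ (u ++ [b]) <:+: y) := by
    rintro y hy hnot ⟨hau_y, hub_y⟩
    refine hnot ⟨maw_iff.2 ⟨fun h => hx_absent (h.trans hy), ?_, hub_y⟩, hlen⟩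
    rwa [List.dropLast_concat]
  have not_both₁ := not_both y₁ List.infix_append_left h₁
  have not_both₂ := not_both y₂ (List.infix_append_of_infix_right (List.infix_cons List.infix_rfl)) h₂
  tauto

theorem case2_factors {α : Type*} (S : Set α) (hash : α)
    (hhash : hash ∉ S) (y₁ y₂ : List α)
    (hy₁ : ∀ a ∈ y₁, a ∈ S) (hy₂ : ∀ a ∈ y₂, a ∈ S)
    (ℓ : ℕ) (a b : α) (ha : a ∈ S) (hb : b ∈ S)
    (u : List α) (hu : ∀ c ∈ u, c ∈ S)
    (hx : MAWle ℓ (y₁ ++ hash :: y₂) (a :: u ++ [b]))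
    (h₁ : ¬ MAWle ℓ y₁ (a :: u ++ [b]))
    (h₂ : ¬ MAWle ℓ y₂ (a :: u ++ [b])) :
    ((a :: u) <:+: y₁ ∧ ¬ (a :: u) <:+: y₂ ∧
      (u ++ [b]) <:+: y₂ ∧ ¬ (u ++ [b]) <:+: y₁) ∨
    ((a :: u) <:+: y₂ ∧ ¬ (a :: u) <:+: y₁ ∧
      (u ++ [b]) <:+: y₁ ∧ ¬ (u ++ [b]) <:+: y₂) :=
  case2_factors_general S hash hhash y₁ y₂ ℓ a b ha hb u hu hx h₁ h₂
end

section
/- Let x = aub (a,b ∈ Σ) be a word of length m ≥ 2 that is a MAW of y₃ = y₁#y₂ with x ∉ MAW(y₁) ∪ MAW(y₂), and suppose au occurs in y₁ but not in y₂. If a occurs in y₂ and x[0..t] is the longest prefix of au that is a factor of y₂, then t < m−1 and x[0..t+1] is a MAW of y₂ that is a prefix of au. -/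
namespace List

variable {α : Type*}

theorem IsInfix.infix_dropLast_or_infix_tail_s9 {f l : List α} (h : f <:+: l) (hne : f ≠ l) :
    f <:+: l.dropLast ∨ f <:+: l.tail := by
  obtain ⟨s, r, rfl⟩ := h
  rcases s with _ | ⟨c, s⟩
  · rcases r.eq_nil_or_concat with rfl | ⟨r, d, rfl⟩
    · simp at hne
    · left
      rw [concat_eq_append, ← append_assoc, dropLast_concat]
      exact infix_append _ _ _
  · exact .inr (infix_append _ _ _)

theorem IsInfix.infix_or_infix_of_append_cons {s l₁ l₂ : List α} {c : α}
    (h : s <:+: l₁ ++ c :: l₂) (hc : c ∉ s) : s <:+: l₁ ∨ s <:+: l₂ := by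
  rcases infix_append_iff.mp h with h | h | ⟨s₁, s₂, rfl, hs₁, hs₂⟩
  · exact .inl h
  · rcases infix_cons_iff.mp h with h | h
    · rcases prefix_cons_iff.mp h with rfl | ⟨t, rfl, -⟩
      · exact .inl nil_infix
      · simp at hc
    · exact .inr h
  · rcases prefix_cons_iff.mp hs₂ with rfl | ⟨t, rfl, -⟩
    · exact .inl (by simpa using hs₁.isInfix)
    · simp at hc

end List

open List

section MAW

variable {α : Type*} {x y : List α}

theorem maw_iff_dropLast_tail : MAW y x ↔ ¬ x <:+: y ∧ x.dropLast <:+: y ∧ x.tail <:+: y := by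
  constructor
  · rintro ⟨habs, hfac⟩
    have hlen : 0 < x.length := length_pos_iff.mpr fun hx => habs (hx ▸ nil_infix)
    refine ⟨habs, hfac _ (dropLast_prefix x).isInfix ?_, hfac _ (tail_suffix x).isInfix ?_⟩
    · exact fun h => by have := congrArg length h; simp only [length_dropLast] at this; omega
    · exact fun h => by have := congrArg length h; simp only [length_tail] at this; omega
  · rintro ⟨habs, hd, ht⟩
    refine ⟨habs, fun f hf hne => ?_⟩
    rcases hf.infix_dropLast_or_infix_tail_s9 hne with h | h
    exacts [h.trans hd, h.trans ht]

theorem MAW.tail_infix_right_of_not_maw_left {y₁ y₂ : List α} {c : α}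
    (hx : MAW (y₁ ++ c :: y₂) x) (hc : c ∉ x.tail) (h₁ : ¬ MAW y₁ x)
    (hd : x.dropLast <:+: y₁) : x.tail <:+: y₂ := by
  obtain ⟨habs, -, ht⟩ := maw_iff_dropLast_tail.mp hx
  refine (ht.infix_or_infix_of_append_cons hc).resolve_left fun ht₁ => h₁ ?_
  exact maw_iff_dropLast_tail.mpr ⟨fun h => habs (h.trans (prefix_append _ _).isInfix), hd, ht₁⟩

theorem maw_take_succ {n : ℕ} (hn : x.take n <:+: y) (htail : x.tail <:+: y)
    (habs : ¬ x.take (n + 1) <:+: y) : MAW y (x.take (n + 1)) := by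
  have hlt : n < x.length := by
    by_contra! hle
    rw [take_of_length_le hle] at hn
    exact habs (by rwa [take_of_length_le (by omega)])
  refine maw_iff_dropLast_tail.mpr ⟨habs, ?_, ?_⟩
  · rwa [take_add_one, getElem?_eq_getElem hlt, Option.toList_some, dropLast_concat]
  · rw [tail_take_eq_take_tail]
    exact (take_prefix _ _).isInfix.trans htail

end MAW

theorem longest_prefix_extension_is_maw_general {α : Type*} (S : Set α) (hash : α)
    (hhash : hash ∉ S) (y₁ y₂ : List α)
    (a b : α) (hb : b ∈ S) (u : List α) (hu : ∀ c ∈ u, c ∈ S)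
    (hx : MAW (y₁ ++ hash :: y₂) (a :: u ++ [b]))
    (h₁ : ¬ MAW y₁ (a :: u ++ [b]))
    (hau₁ : (a :: u) <:+: y₁) (hau₂ : ¬ (a :: u) <:+: y₂)
    (t : ℕ) (htle : t + 1 ≤ (a :: u).length)
    (htfac : (a :: u ++ [b]).take (t + 1) <:+: y₂)
    (htmax : ∀ s : List α, s <+: (a :: u) → s <:+: y₂ → s.length ≤ t + 1) :
    t < (a :: u ++ [b]).length - 1 ∧
      MAW y₂ ((a :: u ++ [b]).take (t + 2)) ∧
      (a :: u ++ [b]).take (t + 2) <+: (a :: u) := by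
  have hhash_tail : hash ∉ (a :: u ++ [b]).tail := by
    simpa using ⟨fun h => hhash (hu _ h), fun h => hhash (h ▸ hb)⟩
  have htail : (a :: u ++ [b]).tail <:+: y₂ :=
    hx.tail_infix_right_of_not_maw_left hhash_tail h₁ (by rwa [dropLast_concat])
  have hlt : t + 1 < (a :: u).length :=
    htle.lt_of_ne fun h => hau₂ (by rwa [take_left' h.symm] at htfac)
  have hpre : (a :: u ++ [b]).take (t + 2) <+: a :: u := by
    rw [take_append_of_le_length hlt]
    exact take_prefix _ _
  refine ⟨?_, maw_take_succ htfac htail fun h => ?_, hpre⟩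
  · simp only [length_append, length_cons, length_nil] at hlt ⊢
    omega
  · have := htmax _ hpre h
    simp only [length_take, length_append, length_cons, length_nil] at this hlt
    omega

theorem longest_prefix_extension_is_maw {α : Type*} (S : Set α) (hash : α)
    (hhash : hash ∉ S) (y₁ y₂ : List α)
    (hy₁ : ∀ a ∈ y₁, a ∈ S) (hy₂ : ∀ a ∈ y₂, a ∈ S)
    (a b : α) (ha : a ∈ S) (hb : b ∈ S) (u : List α) (hu : ∀ c ∈ u, c ∈ S)
    (hx : MAW (y₁ ++ hash :: y₂) (a :: u ++ [b]))
    (h₁ : ¬ MAW y₁ (a :: u ++ [b])) (h₂ : ¬ MAW y₂ (a :: u ++ [b]))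
    (hau₁ : (a :: u) <:+: y₁) (hau₂ : ¬ (a :: u) <:+: y₂)
    (haocc : [a] <:+: y₂)
    (t : ℕ) (htle : t + 1 ≤ (a :: u).length)
    (htfac : (a :: u ++ [b]).take (t + 1) <:+: y₂)
    (htmax : ∀ s : List α, s <+: (a :: u) → s <:+: y₂ → s.length ≤ t + 1) :
    t < (a :: u ++ [b]).length - 1 ∧
      MAW y₂ ((a :: u ++ [b]).take (t + 2)) ∧
      (a :: u ++ [b]).take (t + 2) <+: (a :: u) :=
  longest_prefix_extension_is_maw_general S hash hhash y₁ y₂ a b hb u hu hx h₁ hau₁ hau₂ t htle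
    htfac htmax
end

section
/- Let y₁, y₂ be words over Σ, # ∉ Σ, y₃ = y₁#y₂. Then MAW^ℓ(y₃) restricted to words over Σ of length ≥ 2 equals the union of: (Case 1) those words of MAW^ℓ(y₁) ∪ MAW^ℓ(y₂) that are superwords of a word in the other set (where a word counts as a superword of itself), and (Case 2) the words aub (a,b ∈ Σ) such that au occurs in exactly one of y₁,y₂, ub occurs in exactly the other, |aub| ≤ ℓ, and every proper factor of aub occurs in y₁ or y₂. -/
private lemma suffix_of_suffix_length_le' {α : Type*} {l₁ l₂ l₃ : List α}
    (h₁ : l₁ <:+ l₃) (h₂ : l₂ <:+ l₃) (h : l₁.length ≤ l₂.length) : l₁ <:+ l₂ := by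
  rw [← List.reverse_prefix] at h₁ h₂ ⊢
  exact List.prefix_of_prefix_length_le h₁ h₂ (by simpa)

private lemma infix_split_s11 {α : Type*} {c : α} {x y₁ y₂ : List α} (hc : c ∉ x) :
    x <:+: y₁ ++ c :: y₂ ↔ x <:+: y₁ ∨ x <:+: y₂ := by
  constructor
  · rintro ⟨s, t, hst⟩
    by_cases h1 : s.length + x.length ≤ y₁.length
    · left
      have hpre : s ++ x <+: y₁ ++ c :: y₂ := ⟨t, by simpa using hst⟩
      have hpre2 : s ++ x <+: y₁ :=
        List.prefix_of_prefix_length_le hpre (List.prefix_append _ _) (by simpa using h1)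
      exact ((List.suffix_append s x).isInfix).trans hpre2.isInfix
    · by_cases h2 : y₁.length + 1 ≤ s.length
      · right
        have hsuf : x ++ t <:+ y₁ ++ c :: y₂ := ⟨s, by simpa using hst⟩
        have hlen : (x ++ t).length ≤ y₂.length := by
          have := congrArg List.length hst
          simp at this ⊢
          omega
        have hsuf2 : x ++ t <:+ y₂ :=
          suffix_of_suffix_length_le' hsuf ⟨y₁ ++ [c], by simp⟩ hlen
        exact ((List.prefix_append x t).isInfix).trans hsuf2.isInfix
      · exfalso
        push_neg at h1 h2
        have hx : s.length ≤ y₁.length := by omega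
        have hidx : y₁.length < (y₁ ++ c :: y₂).length := by simp
        have hidx2 : y₁.length - s.length < x.length := by omega
        have hc1 : (y₁ ++ c :: y₂)[y₁.length]'hidx = c := by
          rw [List.getElem_append_right (le_refl _)]
          simp
        have h3 : y₁.length < (s ++ x).length := by simp; omega
        have hc2 : x[y₁.length - s.length]'hidx2 = c := by
          calc x[y₁.length - s.length]'hidx2 = (s ++ x)[y₁.length]'h3 :=
                (List.getElem_append_right hx).symm
            _ = ((s ++ x) ++ t)[y₁.length]'(by simp; omega) :=
                (List.getElem_append_left h3).symm
            _ = (y₁ ++ c :: y₂)[y₁.length]'hidx :=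
                List.getElem_of_eq (by simpa using hst) _
            _ = c := hc1
        exact hc (hc2 ▸ List.getElem_mem hidx2)
  · rintro (h | h)
    · exact h.trans ((List.prefix_append y₁ (c :: y₂)).isInfix)
    · have hs : y₂ <:+ y₁ ++ c :: y₂ := ⟨y₁ ++ [c], by simp⟩
      exact h.trans hs.isInfix

private lemma infix_proper_cases {α : Type*} {f x : List α} (h : f <:+: x) (hne : f ≠ x) :
    f <:+: x.dropLast ∨ f <:+: x.tail := by
  obtain ⟨s, t, hst⟩ := h
  rcases t.eq_nil_or_concat with rfl | ⟨t', b, rfl⟩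
  · rcases s with _ | ⟨a, s'⟩
    · exact absurd (by simpa using hst) hne
    · refine Or.inr ⟨s', [], ?_⟩
      rw [← hst]; simp
  · refine Or.inl ⟨s, t', ?_⟩
    rw [← hst]
    simp [List.concat_eq_append, ← List.append_assoc, List.dropLast_concat]

private lemma exists_maw_infix {α : Type*} {y x : List α} (h : ¬ x <:+: y) :
    ∃ w, MAW y w ∧ w <:+: x := by
  suffices H : ∀ n (x : List α), x.length ≤ n → ¬ x <:+: y → ∃ w, MAW y w ∧ w <:+: x from
    H x.length x le_rfl h
  intro n
  induction n with
  | zero =>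
    intro x hl hx
    interval_cases hx' : x.length
    · exact absurd (List.length_eq_zero_iff.mp hx' ▸ List.nil_infix) hx
  | succ n ih =>
    intro x hl hx
    by_cases hall : ∀ f, f <:+: x → f ≠ x → f <:+: y
    · exact ⟨x, ⟨hx, hall⟩, List.infix_refl x⟩
    · push_neg at hall
      obtain ⟨f, hf, hfne, hfy⟩ := hall
      have hflt : f.length < x.length :=
        lt_of_le_of_ne hf.length_le (fun he => hfne (hf.eq_of_length he))
      obtain ⟨w, hw, hwf⟩ := ih f (by omega) hfy
      exact ⟨w, hw, hwf.trans hf⟩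

theorem maw_concat_characterization {α : Type*} (S : Set α) (hash : α)
    (hhash : hash ∉ S) (y₁ y₂ : List α)
    (hy₁ : ∀ a ∈ y₁, a ∈ S) (hy₂ : ∀ a ∈ y₂, a ∈ S)
    (ℓ : ℕ) (x : List α) (hxS : ∀ a ∈ x, a ∈ S) (hlen : 2 ≤ x.length) :
    MAWle ℓ (y₁ ++ hash :: y₂) x ↔
      -- Case 1
      (((MAWle ℓ y₁ x ∧ ∃ w : List α, MAWle ℓ y₂ w ∧ w <:+: x) ∨
        (MAWle ℓ y₂ x ∧ ∃ w : List α, MAWle ℓ y₁ w ∧ w <:+: x)) ∨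
      -- Case 2
      (∃ (a b : α) (u : List α), x = a :: u ++ [b] ∧
        (((a :: u) <:+: y₁ ∧ ¬ (a :: u) <:+: y₂ ∧
            (u ++ [b]) <:+: y₂ ∧ ¬ (u ++ [b]) <:+: y₁) ∨
          ((a :: u) <:+: y₂ ∧ ¬ (a :: u) <:+: y₁ ∧
            (u ++ [b]) <:+: y₁ ∧ ¬ (u ++ [b]) <:+: y₂)) ∧
        x.length ≤ ℓ ∧
        ∀ f : List α, f <:+: x → f ≠ x → (f <:+: y₁ ∨ f <:+: y₂))) := by
  have hxh : hash ∉ x := fun h => hhash (hxS _ h)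
  have hsplit : ∀ f : List α, hash ∉ f → (f <:+: y₁ ++ hash :: y₂ ↔ f <:+: y₁ ∨ f <:+: y₂) :=
    fun f hf => infix_split_s11 hf
  obtain ⟨a, r, rfl⟩ : ∃ a r, x = a :: r := by
    cases x with
    | nil => simp at hlen
    | cons a r => exact ⟨a, r, rfl⟩
  obtain ⟨u, b, rfl⟩ : ∃ u b, r = u ++ [b] := by
    rcases r.eq_nil_or_concat with rfl | ⟨u, b, rfl⟩
    · simp at hlen
    · exact ⟨u, b, by simp⟩
  have hdl : (a :: u ++ [b]).dropLast = a :: u := by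
    show ((a :: u) ++ [b]).dropLast = a :: u
    exact List.dropLast_concat
  have htl : (a :: u ++ [b]).tail = u ++ [b] := rfl
  have hpre : (a :: u) <:+: (a :: u ++ [b]) := ⟨[], [b], by simp⟩
  have hprene : (a :: u) ≠ a :: u ++ [b] := by
    intro h; apply_fun List.length at h; simp at h
  have hsuf : (u ++ [b]) <:+: (a :: u ++ [b]) := ⟨[a], [], by simp⟩
  have hsufne : u ++ [b] ≠ a :: u ++ [b] := by
    intro h; apply_fun List.length at h; simp at h
  constructor
  · rintro ⟨⟨hnx, hprop⟩, hlx⟩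
    have hnx1 : ¬ (a :: u ++ [b]) <:+: y₁ := fun h => hnx ((hsplit _ hxh).2 (Or.inl h))
    have hnx2 : ¬ (a :: u ++ [b]) <:+: y₂ := fun h => hnx ((hsplit _ hxh).2 (Or.inr h))
    have hprop' : ∀ f, f <:+: (a :: u ++ [b]) → f ≠ (a :: u ++ [b]) →
        f <:+: y₁ ∨ f <:+: y₂ := fun f hf hne =>
      (hsplit f (fun hm => hxh (hf.subset hm))).1 (hprop f hf hne)
    have hA := hprop' _ hpre hprene
    have hB := hprop' _ hsuf hsufne
    have hfac : ∀ f, f <:+: (a :: u ++ [b]) → f ≠ (a :: u ++ [b]) →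
        f <:+: (a :: u) ∨ f <:+: (u ++ [b]) := by
      intro f hf hne
      rcases infix_proper_cases hf hne with h | h
      · left; rwa [hdl] at h
      · right; rwa [htl] at h
    by_cases hcase1 : (a :: u) <:+: y₁ ∧ (u ++ [b]) <:+: y₁
    · left; left
      obtain ⟨w, hw, hwx⟩ := exists_maw_infix hnx2
      refine ⟨⟨⟨hnx1, fun f hf hne => ?_⟩, hlx⟩, w, ⟨hw, hwx.length_le.trans hlx⟩, hwx⟩
      rcases hfac f hf hne with h | h
      · exact h.trans hcase1.1
      · exact h.trans hcase1.2
    · by_cases hcase2 : (a :: u) <:+: y₂ ∧ (u ++ [b]) <:+: y₂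
      · left; right
        obtain ⟨w, hw, hwx⟩ := exists_maw_infix hnx1
        refine ⟨⟨⟨hnx2, fun f hf hne => ?_⟩, hlx⟩, w, ⟨hw, hwx.length_le.trans hlx⟩, hwx⟩
        rcases hfac f hf hne with h | h
        · exact h.trans hcase2.1
        · exact h.trans hcase2.2
      · right
        refine ⟨a, b, u, rfl, ?_, hlx, hprop'⟩
        rcases hA with hA1 | hA2
        · have hB2 : (u ++ [b]) <:+: y₂ := by
            rcases hB with h | h
            · exact absurd ⟨hA1, h⟩ hcase1
            · exact h
          exact Or.inl ⟨hA1, fun h => hcase2 ⟨h, hB2⟩, hB2, fun h => hcase1 ⟨hA1, h⟩⟩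
        · have hB1 : (u ++ [b]) <:+: y₁ := by
            rcases hB with h | h
            · exact h
            · exact absurd ⟨hA2, h⟩ hcase2
          exact Or.inr ⟨hA2, fun h => hcase1 ⟨h, hB1⟩, hB1, fun h => hcase2 ⟨hA2, h⟩⟩
  · rintro ((⟨⟨⟨hnx1, hp1⟩, hlx⟩, w, ⟨⟨hnw2, _⟩, _⟩, hwx⟩ |
      ⟨⟨⟨hnx2, hp2⟩, hlx⟩, w, ⟨⟨hnw1, _⟩, _⟩, hwx⟩) |
      ⟨a', b', u', heq, hcond, hlx, hp⟩)
    · refine ⟨⟨?_, fun f hf hne =>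
        (hsplit f (fun hm => hxh (hf.subset hm))).2 (Or.inl (hp1 f hf hne))⟩, hlx⟩
      intro h
      rcases (hsplit _ hxh).1 h with h1 | h2
      · exact hnx1 h1
      · exact hnw2 (hwx.trans h2)
    · refine ⟨⟨?_, fun f hf hne =>
        (hsplit f (fun hm => hxh (hf.subset hm))).2 (Or.inr (hp2 f hf hne))⟩, hlx⟩
      intro h
      rcases (hsplit _ hxh).1 h with h1 | h2
      · exact hnw1 (hwx.trans h1)
      · exact hnx2 h2
    · have hpre' : (a' :: u') <:+: (a :: u ++ [b]) := ⟨[], [b'], by simpa using heq.symm⟩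
      have hsuf' : (u' ++ [b']) <:+: (a :: u ++ [b]) := ⟨[a'], [], by simpa using heq.symm⟩
      refine ⟨⟨?_, fun f hf hne =>
        (hsplit f (fun hm => hxh (hf.subset hm))).2 (hp f hf hne)⟩, hlx⟩
      intro h
      rcases (hsplit _ hxh).1 h with h1 | h2
      · rcases hcond with ⟨_, _, _, hB1n⟩ | ⟨_, hA1n, _, _⟩
        · exact hB1n (hsuf'.trans h1)
        · exact hA1n (hpre'.trans h1)
      · rcases hcond with ⟨_, hA2n, _, _⟩ | ⟨_, _, _, hB2n⟩
        · exact hA2n (hpre'.trans h2)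
        · exact hB2n (hsuf'.trans h2)
end

section
/- Let N > 1 and suppose x ∈ MAW^ℓ(y₁#…#y_N) \ (MAW^ℓ(y₁#…#y_{N−1}) ∪ MAW^ℓ(y_N)). Then x has a prefix in RMAW^ℓ(y₁#…#y_{N−1}) and a suffix in RMAW^ℓ(y_N), or x has a prefix in RMAW^ℓ(y_N) and a suffix in RMAW^ℓ(y₁#…#y_{N−1}), where RMAW^ℓ(u) with respect to v is the set of words of MAW^ℓ(u) that are not superwords of any word of MAW^ℓ(v). -/
/-!
Since `#` does not occur in `x`, every proper factor of `x`, being a factor of `u ++ # :: v`, is a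
factor of `u` or of `v` (here `u = y₁#…#y_{N−1}` and `v = y_N`). If `x.tail` and `x.dropLast` were
factors of the same word, `x` would be a MAW of that word; so, say, `x.tail` is a factor of `u` and
`x.dropLast` one of `v`. The shortest prefix of `x` absent from `u` is then a MAW of `u`; it is not
`x` itself, hence a proper factor of `x` and so a factor of `v`, which keeps every MAW of `v` out of
it. Symmetrically, the shortest suffix of `x` absent from `v` is a MAW of `v` occurring in `u`.
-/

namespace List

variable {α : Type*} {l l₁ l₂ u v : List α} {a : α}

theorem tail_ne_self (h : l ≠ []) : l.tail ≠ l := by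
  cases l with
  | nil => contradiction
  | cons b l => simp

theorem dropLast_ne_self (h : l ≠ []) : l.dropLast ≠ l := fun heq => by
  have hlen := congrArg length heq
  rw [length_dropLast] at hlen
  have := length_pos_iff.mpr h
  omega

theorem IsInfix.infix_tail_or_infix_dropLast (h : l₁ <:+: l₂) (hne : l₁ ≠ l₂) :
    l₁ <:+: l₂.tail ∨ l₁ <:+: l₂.dropLast := by
  obtain ⟨s, t, rfl⟩ := h
  rcases s with _ | ⟨b, s⟩
  · rcases t.eq_nil_or_concat with rfl | ⟨t, b, rfl⟩
    · simp at hne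
    · right
      simp [← append_assoc, concat_eq_append, infix_append_left]
  · left
    simp

theorem eq_nil_of_prefix_cons_of_not_mem (h : l₁ <+: a :: l₂) (ha : a ∉ l₁) : l₁ = [] := by
  rcases prefix_cons_iff.mp h with h | ⟨t, rfl, -⟩
  · exact h
  · simp at ha

theorem IsInfix.infix_or_infix_of_not_mem_s16 (h : l <:+: u ++ a :: v) (ha : a ∉ l) :
    l <:+: u ∨ l <:+: v := by
  rcases infix_append_iff.mp h with h | h | ⟨l₁, l₂, rfl, h₁, h₂⟩
  · exact .inl h
  · rcases infix_cons_iff.mp h with h | h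
    · exact .inl (eq_nil_of_prefix_cons_of_not_mem h ha ▸ nil_infix)
    · exact .inr h
  · obtain rfl := eq_nil_of_prefix_cons_of_not_mem h₂ (fun h => ha (mem_append_right _ h))
    exact .inl (by simpa using h₁.isInfix)

theorem intercalate_append_singleton (s : List α) {l : List (List α)} (hl : l ≠ [])
    (a : List α) : s.intercalate (l ++ [a]) = s.intercalate l ++ s ++ a := by
  induction l with
  | nil => contradiction
  | cons b l ih =>
    rcases l with _ | ⟨c, l⟩
    · simp
    · simp only [cons_append] at ih ⊢
      rw [intercalate_cons_cons, ih (cons_ne_nil _ _), intercalate_cons_cons]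
      simp

end List

open List

section

variable {α : Type*} {ℓ : ℕ} {x y u v : List α}

theorem MAW.ne_nil (h : MAW y x) : x ≠ [] := by
  rintro rfl
  exact h.1 nil_infix

theorem maw_of_tail_infix_of_dropLast_infix (habs : ¬ x <:+: y) (htail : x.tail <:+: y)
    (hdrop : x.dropLast <:+: y) : MAW y x :=
  ⟨habs, fun _ hf hne =>
    (hf.infix_tail_or_infix_dropLast hne).elim (·.trans htail) (·.trans hdrop)⟩

theorem exists_prefix_maw_of_tail_infix (habs : ¬ x <:+: y) (htail : x.tail <:+: y) :
    ∃ p, p <+: x ∧ MAW y p := by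
  induction x using reverseRecOn with
  | nil => exact absurd nil_infix habs
  | append_singleton x c ih =>
    by_cases hx : x <:+: y
    · exact ⟨x ++ [c], prefix_rfl,
        maw_of_tail_infix_of_dropLast_infix habs htail (by simpa using hx)⟩
    · have htail' : x.tail <+: (x ++ [c]).tail := by cases x <;> simp
      obtain ⟨p, hp, hmaw⟩ := ih hx (htail'.isInfix.trans htail)
      exact ⟨p, hp.trans (prefix_append _ _), hmaw⟩

theorem exists_suffix_maw_of_dropLast_infix (habs : ¬ x <:+: y) (hdrop : x.dropLast <:+: y) :
    ∃ s, s <:+ x ∧ MAW y s := by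
  induction x with
  | nil => exact absurd nil_infix habs
  | cons c x ih =>
    by_cases hx : x <:+: y
    · exact ⟨c :: x, suffix_rfl, maw_of_tail_infix_of_dropLast_infix habs hx hdrop⟩
    · have hdrop' : x.dropLast <:+ (c :: x).dropLast := by
        rcases x with _ | ⟨d, x⟩
        · simp
        · simp [suffix_cons]
      obtain ⟨s, hs, hmaw⟩ := ih hx (hdrop'.isInfix.trans hdrop)
      exact ⟨s, hs.trans (suffix_cons _ _), hmaw⟩

theorem MAW.not_infix_left {a : α} (h : MAW (u ++ a :: v) x) : ¬ x <:+: u :=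
  fun hu => h.1 (hu.trans infix_append_left)

theorem MAW.not_infix_right {a : α} (h : MAW (u ++ a :: v) x) : ¬ x <:+: v :=
  fun hv => h.1 (hv.trans ((suffix_cons a v).isInfix.trans infix_append_right))

theorem MAW.infix_or_infix_of_ne {a : α} (h : MAW (u ++ a :: v) x) (ha : a ∉ x) {f : List α}
    (hf : f <:+: x) (hne : f ≠ x) : f <:+: u ∨ f <:+: v :=
  (h.2 f hf hne).infix_or_infix_of_not_mem_s16 fun haf => ha (hf.subset haf)

theorem rmaw_of_mawle_of_infix {p : List α} (h : MAWle ℓ u p) (hp : p <:+: v) : RMAW ℓ u v p :=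
  ⟨h, fun _ hw hwp => hw.1.1 (hwp.trans hp)⟩

theorem exists_prefix_rmaw (hfac : ∀ f, f <:+: x → f ≠ x → f <:+: u ∨ f <:+: v)
    (hlen : x.length ≤ ℓ) (habs : ¬ x <:+: u) (htail : x.tail <:+: u) (hx : ¬ MAWle ℓ u x) :
    ∃ p, p <+: x ∧ RMAW ℓ u v p := by
  obtain ⟨p, hpx, hp⟩ := exists_prefix_maw_of_tail_infix habs htail
  have hne : p ≠ x := by
    rintro rfl
    exact hx ⟨hp, hlen⟩
  exact ⟨p, hpx, rmaw_of_mawle_of_infix ⟨hp, hpx.length_le.trans hlen⟩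
    ((hfac p hpx.isInfix hne).resolve_left hp.1)⟩

theorem exists_suffix_rmaw (hfac : ∀ f, f <:+: x → f ≠ x → f <:+: u ∨ f <:+: v)
    (hlen : x.length ≤ ℓ) (habs : ¬ x <:+: v) (hdrop : x.dropLast <:+: v) (hx : ¬ MAWle ℓ v x) :
    ∃ s, s <:+ x ∧ RMAW ℓ v u s := by
  obtain ⟨s, hsx, hs⟩ := exists_suffix_maw_of_dropLast_infix habs hdrop
  have hne : s ≠ x := by
    rintro rfl
    exact hx ⟨hs, hlen⟩
  exact ⟨s, hsx, rmaw_of_mawle_of_infix ⟨hs, hsx.length_le.trans hlen⟩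
    ((hfac s hsx.isInfix hne).resolve_right hs.1)⟩

theorem rmaw_prefix_suffix_of_mawle_append_cons {a : α} (hx : MAWle ℓ (u ++ a :: v) x)
    (ha : a ∉ x) (hu : ¬ MAWle ℓ u x) (hv : ¬ MAWle ℓ v x) :
    ((∃ p, p <+: x ∧ RMAW ℓ u v p) ∧ (∃ s, s <:+ x ∧ RMAW ℓ v u s)) ∨
      ((∃ p, p <+: x ∧ RMAW ℓ v u p) ∧ (∃ s, s <:+ x ∧ RMAW ℓ u v s)) := by
  obtain ⟨hmaw, hlen⟩ := hx
  have hfac : ∀ f, f <:+: x → f ≠ x → f <:+: u ∨ f <:+: v :=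
    fun _ => hmaw.infix_or_infix_of_ne ha
  have hfac' : ∀ f, f <:+: x → f ≠ x → f <:+: v ∨ f <:+: u :=
    fun f hf hne => (hfac f hf hne).symm
  have hxu := hmaw.not_infix_left
  have hxv := hmaw.not_infix_right
  rcases hfac _ (tail_suffix x).isInfix (tail_ne_self hmaw.ne_nil) with htu | htv <;>
    rcases hfac _ (dropLast_prefix x).isInfix (dropLast_ne_self hmaw.ne_nil) with hdu | hdv
  · exact absurd ⟨maw_of_tail_infix_of_dropLast_infix hxu htu hdu, hlen⟩ hu
  · exact .inl ⟨exists_prefix_rmaw hfac hlen hxu htu hu, exists_suffix_rmaw hfac hlen hxv hdv hv⟩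
  · exact .inr ⟨exists_prefix_rmaw hfac' hlen hxv htv hv, exists_suffix_rmaw hfac' hlen hxu hdu hu⟩
  · exact absurd ⟨maw_of_tail_infix_of_dropLast_infix hxv htv hdv, hlen⟩ hv

end

theorem incremental_reduced_prefix_suffix_general {α : Type*} (S : Set α) (hash : α)
    (hhash : hash ∉ S) (ys : List (List α)) (hne : ys ≠ [])
    (hN : 2 ≤ ys.length)
    (ℓ : ℕ) (x : List α) (hxS : ∀ a ∈ x, a ∈ S)
    (hx : MAWle ℓ (List.intercalate [hash] ys) x)
    (h₁ : ¬ MAWle ℓ (List.intercalate [hash] ys.dropLast) x)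
    (h₂ : ¬ MAWle ℓ (ys.getLast hne) x) :
    ((∃ p : List α, p <+: x ∧
        RMAW ℓ (List.intercalate [hash] ys.dropLast) (ys.getLast hne) p) ∧
      (∃ s : List α, s <:+ x ∧
        RMAW ℓ (ys.getLast hne) (List.intercalate [hash] ys.dropLast) s)) ∨
    ((∃ p : List α, p <+: x ∧
        RMAW ℓ (ys.getLast hne) (List.intercalate [hash] ys.dropLast) p) ∧
      (∃ s : List α, s <:+ x ∧
        RMAW ℓ (List.intercalate [hash] ys.dropLast) (ys.getLast hne) s)) := by
  have hinit : ys.dropLast ≠ [] := by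
    rw [← length_pos_iff, length_dropLast]
    omega
  have hsplit : [hash].intercalate ys =
      [hash].intercalate ys.dropLast ++ hash :: ys.getLast hne := by
    conv_lhs => rw [← dropLast_append_getLast hne]
    simp [intercalate_append_singleton _ hinit]
  rw [hsplit] at hx
  exact rmaw_prefix_suffix_of_mawle_append_cons hx (fun h => hhash (hxS hash h)) h₁ h₂

theorem incremental_reduced_prefix_suffix {α : Type*} (S : Set α) (hash : α)
    (hhash : hash ∉ S) (ys : List (List α)) (hne : ys ≠ [])
    (hN : 2 ≤ ys.length) (hS : ∀ w ∈ ys, ∀ a ∈ w, a ∈ S)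
    (ℓ : ℕ) (x : List α) (hxS : ∀ a ∈ x, a ∈ S)
    (hx : MAWle ℓ (List.intercalate [hash] ys) x)
    (h₁ : ¬ MAWle ℓ (List.intercalate [hash] ys.dropLast) x)
    (h₂ : ¬ MAWle ℓ (ys.getLast hne) x) :
    ((∃ p : List α, p <+: x ∧
        RMAW ℓ (List.intercalate [hash] ys.dropLast) (ys.getLast hne) p) ∧
      (∃ s : List α, s <:+ x ∧
        RMAW ℓ (ys.getLast hne) (List.intercalate [hash] ys.dropLast) s)) ∨
    ((∃ p : List α, p <+: x ∧
        RMAW ℓ (ys.getLast hne) (List.intercalate [hash] ys.dropLast) p) ∧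
      (∃ s : List α, s <:+ x ∧
        RMAW ℓ (List.intercalate [hash] ys.dropLast) (ys.getLast hne) s)) :=
  incremental_reduced_prefix_suffix_general S hash hhash ys hne hN ℓ x hxS hx h₁ h₂
end

section
/- If x = aub is a MAW of y₃ = y₁#y₂ with au a factor of y₁ but not y₂ and ub a factor of y₂ but not y₁, and if x₂ ∈ MAW(y₂) is a factor of au while x₁ ∈ MAW(y₁) is a factor of ub, then x₂ is a prefix of au, x₁ is a suffix of ub, and neither of x₁, x₂ is a factor of the other. -/
lemma infix_cons' {α : Type*} {x u : List α} {a : α} (h : x <:+: (a :: u)) :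
    x <+: (a :: u) ∨ x <:+: u := by
  obtain ⟨s, t, h⟩ := h
  cases s with
  | nil => exact Or.inl ⟨t, by simpa using h⟩
  | cons c s' =>
    simp only [List.cons_append, List.cons.injEq] at h
    exact Or.inr ⟨s', t, h.2⟩

lemma infix_concat' {α : Type*} {x u : List α} {b : α} (h : x <:+: (u ++ [b])) :
    x <:+ (u ++ [b]) ∨ x <:+: u := by
  have h' : x.reverse <:+: (b :: u.reverse) := by simpa using h.reverse
  rcases infix_cons' h' with hp | hi
  · exact Or.inl (by simpa using hp.reverse)
  · exact Or.inr (by simpa using hi.reverse)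

theorem case2_witnesses_position {α : Type*} (S : Set α) (hash : α)
    (hhash : hash ∉ S) (y₁ y₂ : List α)
    (hy₁ : ∀ a ∈ y₁, a ∈ S) (hy₂ : ∀ a ∈ y₂, a ∈ S)
    (a b : α) (ha : a ∈ S) (hb : b ∈ S) (u : List α) (hu : ∀ c ∈ u, c ∈ S)
    (hx : MAW (y₁ ++ hash :: y₂) (a :: u ++ [b]))
    (hau₁ : (a :: u) <:+: y₁) (hau₂ : ¬ (a :: u) <:+: y₂)
    (hub₂ : (u ++ [b]) <:+: y₂) (hub₁ : ¬ (u ++ [b]) <:+: y₁)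
    (x₁ x₂ : List α)
    (hx₂ : MAW y₂ x₂) (hx₂f : x₂ <:+: (a :: u))
    (hx₁ : MAW y₁ x₁) (hx₁f : x₁ <:+: (u ++ [b])) :
    x₂ <+: (a :: u) ∧ x₁ <:+ (u ++ [b]) ∧
      ¬ x₁ <:+: x₂ ∧ ¬ x₂ <:+: x₁ := by
  have hu₂ : u <:+: y₂ := ((u.prefix_append [b]).isInfix).trans hub₂
  have hu₁ : u <:+: y₁ := ((u.suffix_cons a).isInfix).trans hau₁
  have h2 : x₂ <+: (a :: u) := by
    rcases infix_cons' hx₂f with h | h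
    · exact h
    · exact absurd (h.trans hu₂) hx₂.1
  have h1 : x₁ <:+ (u ++ [b]) := by
    rcases infix_concat' hx₁f with h | h
    · exact h
    · exact absurd (h.trans hu₁) hx₁.1
  refine ⟨h2, h1, ?_, ?_⟩
  · intro h
    exact hx₁.1 (h.trans (h2.isInfix.trans hau₁))
  · intro h
    exact hx₂.1 (h.trans (h1.isInfix.trans hub₂))
end
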